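/- arXiv:2605.23009 — 3 statements merged into one kernel-verified Lean document; each statement's English description precedes it below -/
import Mathlib

section
/- Let γ < 2, and for n ∈ ℕ define p_n(x) = x^{1−γ} L_n^{a}(−ν x^{2−γ}) with a = 1/(2−γ), ν = 2μ/((γ−2)σ²) < 0, where L_n^a is the generalized Laguerre polynomial. Then p_n satisfies the eigenvalue equation L_γ[p_n] = −μ(2−γ)(n+1) p_n on (0,∞), where L_γ[p] = −μ ∂_x(x p) + ∂_{xx}((σ²/2) x^γ p). -/
open Real Set
open Filter Topology

/-- Eigenvalue equation for the CEV Fokker–Planck operator, `γ < 2`.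
`L` stands for the generalized Laguerre polynomial `L_n^a` with `a = 1/(2-γ)`,
characterized by smoothness and the Laguerre ODE `y u'' + (a+1-y) u' + n u = 0`. -/
theorem cev_eigenfunctions_lt_two (γ μ σ : ℝ) (hγ0 : 0 < γ) (hγ2 : γ < 2) (hμ : 0 < μ)
    (hσ : 0 < σ) (a ν : ℝ) (ha : a = 1 / (2 - γ)) (hν : ν = 2 * μ / ((γ - 2) * σ ^ 2))
    (n : ℕ) (L : ℝ → ℝ) (hL : ContDiff ℝ (⊤ : ℕ∞) L)
    (hLag : ∀ y : ℝ, 0 < y →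
      y * deriv (deriv L) y + (a + 1 - y) * deriv L y + (n : ℝ) * L y = 0)
    (p : ℝ → ℝ) (hp : p = fun x => x ^ (1 - γ) * L (-ν * x ^ (2 - γ))) :
    ∀ x : ℝ, 0 < x →
      -μ * deriv (fun t => t * p t) x
        + deriv (deriv (fun t => σ ^ 2 / 2 * t ^ γ * p t)) x
      = -μ * (2 - γ) * ((n : ℝ) + 1) * p x := by
  have hβ : (0:ℝ) < 2 - γ := by linarith
  have hν0 : ν < 0 := by
    rw [hν]
    apply div_neg_of_pos_of_neg (by positivity)
    exact mul_neg_of_neg_of_pos (by linarith) (by positivity)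
  have hL1 : Differentiable ℝ L := hL.differentiable (by simp)
  have hLi : ContDiff ℝ (↑(⊤ : ℕ∞)) L := hL.of_le (by simp)
  have hL2 : Differentiable ℝ (deriv L) :=
    ((contDiff_infty_iff_deriv.mp hLi).2).differentiable (by norm_num)
  -- inner function derivative
  have hu : ∀ t : ℝ, 0 < t → HasDerivAt (fun s : ℝ => -ν * s ^ (2 - γ))
      (-ν * ((2 - γ) * t ^ (2 - γ - 1))) t := by
    intro t ht
    exact (Real.hasDerivAt_rpow_const (Or.inl ht.ne')).const_mul (-ν)
  have hLc : ∀ t : ℝ, 0 < t → HasDerivAt (fun s : ℝ => L (-ν * s ^ (2 - γ)))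
      (deriv L (-ν * t ^ (2 - γ)) * (-ν * ((2 - γ) * t ^ (2 - γ - 1)))) t := by
    intro t ht
    exact ((hL1 _).hasDerivAt).comp t (hu t ht)
  have hLc' : ∀ t : ℝ, 0 < t → HasDerivAt (fun s : ℝ => deriv L (-ν * s ^ (2 - γ)))
      (deriv (deriv L) (-ν * t ^ (2 - γ)) * (-ν * ((2 - γ) * t ^ (2 - γ - 1)))) t := by
    intro t ht
    exact ((hL2 _).hasDerivAt).comp t (hu t ht)
  intro x hx
  have hmem : Ioi (0:ℝ) ∈ 𝓝 x := isOpen_Ioi.mem_nhds hx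
  have hpt : ∀ t : ℝ, 0 < t → t ^ γ * t ^ (1 - γ) = t := by
    intro t ht
    rw [← Real.rpow_add ht, show γ + (1 - γ) = (1:ℝ) by ring, Real.rpow_one]
  have hpt2 : ∀ t : ℝ, 0 < t → t * t ^ (1 - γ) = t ^ (2 - γ) := by
    intro t ht
    nth_rewrite 1 [← Real.rpow_one t]
    rw [← Real.rpow_add ht, show (1:ℝ) + (1 - γ) = 2 - γ by ring]
  have hpt3 : ∀ t : ℝ, 0 < t → t * t ^ (2 - γ - 1) = t ^ (2 - γ) := by
    intro t ht
    nth_rewrite 1 [← Real.rpow_one t]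
    rw [← Real.rpow_add ht, show (1:ℝ) + (2 - γ - 1) = 2 - γ by ring]
  -- first term
  have e1 : (fun t => t * p t) =ᶠ[𝓝 x] fun t => t ^ (2 - γ) * L (-ν * t ^ (2 - γ)) := by
    filter_upwards [hmem] with t ht
    rw [hp]
    dsimp only
    rw [← mul_assoc, hpt2 t ht]
  have hF1 : HasDerivAt (fun t : ℝ => t ^ (2 - γ) * L (-ν * t ^ (2 - γ)))
      ((2 - γ) * x ^ (2 - γ - 1) * L (-ν * x ^ (2 - γ))
        + x ^ (2 - γ) * (deriv L (-ν * x ^ (2 - γ)) * (-ν * ((2 - γ) * x ^ (2 - γ - 1))))) x :=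
    (Real.hasDerivAt_rpow_const (Or.inl hx.ne')).mul (hLc x hx)
  have hd1 : deriv (fun t => t * p t) x
      = (2 - γ) * x ^ (2 - γ - 1) * L (-ν * x ^ (2 - γ))
        + x ^ (2 - γ) * (deriv L (-ν * x ^ (2 - γ)) * (-ν * ((2 - γ) * x ^ (2 - γ - 1)))) :=
    e1.deriv_eq.trans hF1.deriv
  -- second term
  have e2 : (fun t => σ ^ 2 / 2 * t ^ γ * p t) =ᶠ[𝓝 x]
      fun t => σ ^ 2 / 2 * (t * L (-ν * t ^ (2 - γ))) := by
    filter_upwards [hmem] with t ht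
    rw [hp]
    dsimp only
    rw [mul_assoc, ← mul_assoc (t ^ γ), hpt t ht]
  have hF2 : ∀ t : ℝ, 0 < t →
      HasDerivAt (fun t : ℝ => σ ^ 2 / 2 * (t * L (-ν * t ^ (2 - γ))))
      (σ ^ 2 / 2 * (L (-ν * t ^ (2 - γ))
        + (2 - γ) * (-ν * t ^ (2 - γ) * deriv L (-ν * t ^ (2 - γ))))) t := by
    intro t ht
    have h := ((hasDerivAt_id t).mul (hLc t ht)).const_mul (σ ^ 2 / 2)
    refine h.congr_deriv (Eq.symm ?_)
    simp only [id_eq, one_mul]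
    linear_combination (-(σ ^ 2 / 2 * (2 - γ) * (-ν) * deriv L (-ν * t ^ (2 - γ)))) * hpt3 t ht
  have e3 : deriv (fun t => σ ^ 2 / 2 * t ^ γ * p t) =ᶠ[𝓝 x]
      fun t => σ ^ 2 / 2 * (L (-ν * t ^ (2 - γ))
        + (2 - γ) * (-ν * t ^ (2 - γ) * deriv L (-ν * t ^ (2 - γ)))) := by
    refine e2.deriv.trans ?_
    filter_upwards [hmem] with t ht
    exact (hF2 t ht).deriv
  have hG : HasDerivAt (fun t : ℝ => σ ^ 2 / 2 * (L (-ν * t ^ (2 - γ))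
        + (2 - γ) * (-ν * t ^ (2 - γ) * deriv L (-ν * t ^ (2 - γ)))))
      (σ ^ 2 / 2 * (deriv L (-ν * x ^ (2 - γ)) * (-ν * ((2 - γ) * x ^ (2 - γ - 1)))
        + (2 - γ) * (-ν * ((2 - γ) * x ^ (2 - γ - 1)) * deriv L (-ν * x ^ (2 - γ))
          + -ν * x ^ (2 - γ) * (deriv (deriv L) (-ν * x ^ (2 - γ)) * (-ν * ((2 - γ) * x ^ (2 - γ - 1))))))) x :=
    ((hLc x hx).add (((hu x hx).mul (hLc' x hx)).const_mul (2 - γ))).const_mul (σ ^ 2 / 2)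
  have hd2 : deriv (deriv (fun t => σ ^ 2 / 2 * t ^ γ * p t)) x
      = σ ^ 2 / 2 * (deriv L (-ν * x ^ (2 - γ)) * (-ν * ((2 - γ) * x ^ (2 - γ - 1)))
        + (2 - γ) * (-ν * ((2 - γ) * x ^ (2 - γ - 1)) * deriv L (-ν * x ^ (2 - γ))
          + -ν * x ^ (2 - γ) * (deriv (deriv L) (-ν * x ^ (2 - γ)) * (-ν * ((2 - γ) * x ^ (2 - γ - 1)))))) :=
    e3.deriv_eq.trans hG.deriv
  -- assemble
  have hy : 0 < -ν * x ^ (2 - γ) := by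
    have := Real.rpow_pos_of_pos hx (2 - γ)
    nlinarith
  have hODE := hLag _ hy
  have hexp : x ^ (2 - γ - 1) = x ^ (1 - γ) := by
    rw [show (2 - γ - 1 : ℝ) = 1 - γ by ring]
  have hσν : σ ^ 2 * ν * (γ - 2) = 2 * μ := by
    have hd : (γ - 2) * σ ^ 2 ≠ 0 := mul_ne_zero (by linarith) (by positivity)
    rw [hν, show σ ^ 2 * (2 * μ / ((γ - 2) * σ ^ 2)) * (γ - 2) = 2 * μ / ((γ - 2) * σ ^ 2) * ((γ - 2) * σ ^ 2) by ring]
    exact div_mul_cancel₀ _ hd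
  have haβ : a * (2 - γ) = 1 := by
    rw [ha]
    field_simp
  rw [hd1, hd2, hexp, hp]
  dsimp only
  linear_combination (μ * (2 - γ) * x ^ (1 - γ)) * hODE
    + ((x ^ (1 - γ) * deriv L (-ν * x ^ (2 - γ)) * (1 + (2 - γ))) / 2
       + (-ν) * x ^ (1 - γ) * x ^ (2 - γ) * deriv (deriv L) (-ν * x ^ (2 - γ)) * (2 - γ) / 2)
      * (by linarith [hσν] : σ ^ 2 * (-ν) * (2 - γ) = 2 * μ)
    - (μ * x ^ (1 - γ) * deriv L (-ν * x ^ (2 - γ))) * haβ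
end

section
/- Let γ > 2, μ, σ > 0, ν = 2μ/((γ−2)σ²) > 0, a = 1/(2−γ), and define for n ∈ ℕ the function p_n(x) = x^{1−γ} e^{−ν x^{2−γ}} L_n^{a}(ν x^{2−γ}). Then L_γ[p_n] = (μ − n μ(γ−2)) p_n on (0,∞), where L_γ[p] = −μ ∂_x(x p) + ∂_{xx}((σ²/2) x^γ p). -/
open Real Set Filter Topology

/-! With `b = 2 - γ` and `y = ν x^b`, write `p = x^(b-1) f(y)` for `f(y) = e^{-y} L(y)`.
Then `x p = x^b f(y)` and `x^γ p = x f(y)`, and since `dy/dx = b y / x` both terms of the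
operator become `(x^b / x)` times a combination of `f, f', f''` at `y`. The substitution
`L = e^y f` (Kummer's transformation) turns the Laguerre equation into
`y f'' + (y + a + 1) f' + (a + 1 + n) f = 0`, and with `a b = 1` and `σ² ν b = -2μ` this is
exactly the eigenvalue equation. -/

section PowerSubstitution

variable {f : ℝ → ℝ} {ν b x : ℝ}

theorem HasDerivAt.comp_mul_rpow {g : ℝ → ℝ} {g' : ℝ} (hg : HasDerivAt g g' (ν * x ^ b))
    (hx : 0 < x) : HasDerivAt (fun t => g (ν * t ^ b)) (b * (ν * x ^ b) / x * g') x := by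
  have hy := (hasDerivAt_rpow_const (p := b) (Or.inl hx.ne')).const_mul ν
  refine (hg.comp x hy).congr_deriv ?_
  rw [rpow_sub_one hx.ne']
  ring

theorem hasDerivAt_rpow_mul_comp_mul_rpow (hf : DifferentiableAt ℝ f (ν * x ^ b)) (hx : 0 < x) :
    HasDerivAt (fun t => t ^ b * f (ν * t ^ b))
      (b * x ^ b / x * (f (ν * x ^ b) + ν * x ^ b * deriv f (ν * x ^ b))) x := by
  refine ((hasDerivAt_rpow_const (Or.inl hx.ne')).mul
    (hf.hasDerivAt.comp_mul_rpow hx)).congr_deriv ?_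
  rw [rpow_sub_one hx.ne']
  field_simp

theorem hasDerivAt_mul_comp_mul_rpow (hf : DifferentiableAt ℝ f (ν * x ^ b)) (hx : 0 < x) :
    HasDerivAt (fun t => t * f (ν * t ^ b))
      (f (ν * x ^ b) + b * (ν * x ^ b) * deriv f (ν * x ^ b)) x := by
  refine ((hasDerivAt_id x).mul (hf.hasDerivAt.comp_mul_rpow hx)).congr_deriv ?_
  simp only [id]
  field_simp

theorem deriv_deriv_mul_comp_mul_rpow (hf : ContDiff ℝ 2 f) (hx : 0 < x) :
    deriv (deriv fun t => t * f (ν * t ^ b)) x =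
      b * (ν * x ^ b) / x * ((1 + b) * deriv f (ν * x ^ b)
        + b * (ν * x ^ b) * deriv (deriv f) (ν * x ^ b)) := by
  have hf₁ : Differentiable ℝ f := hf.differentiable two_ne_zero
  have hf₂ : Differentiable ℝ (deriv f) := hf.differentiable_deriv_two
  have hfirst : deriv (fun t => t * f (ν * t ^ b)) =ᶠ[𝓝 x]
      fun t => f (ν * t ^ b) + b * (ν * t ^ b) * deriv f (ν * t ^ b) := by
    filter_upwards [Ioi_mem_nhds hx] with t ht
    exact (hasDerivAt_mul_comp_mul_rpow (hf₁ _) ht).deriv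
  have hk : HasDerivAt (fun y => f y + b * y * deriv f y)
      ((1 + b) * deriv f (ν * x ^ b) + b * (ν * x ^ b) * deriv (deriv f) (ν * x ^ b))
      (ν * x ^ b) := by
    refine ((hf₁ _).hasDerivAt.add (((hasDerivAt_id _).const_mul b).mul
      (hf₂ _).hasDerivAt)).congr_deriv ?_
    simp only [id]
    ring
  rw [hfirst.deriv_eq]
  exact (hk.comp_mul_rpow hx).deriv

end PowerSubstitution

section Kummer

variable {L : ℝ → ℝ}

theorem deriv_exp_neg_mul (hL : Differentiable ℝ L) :
    deriv (fun t => exp (-t) * L t) = fun t => exp (-t) * (deriv L t - L t) := by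
  funext t
  refine (((hasDerivAt_neg t).exp).mul (hL t).hasDerivAt).deriv.trans ?_
  ring

theorem laguerre_ode_exp_neg_mul (hL : ContDiff ℝ 2 L) {a n y : ℝ}
    (hode : y * deriv (deriv L) y + (a + 1 - y) * deriv L y + n * L y = 0) :
    y * deriv (deriv fun t => exp (-t) * L t) y
      + (y + a + 1) * deriv (fun t => exp (-t) * L t) y
      + (a + 1 + n) * (exp (-y) * L y) = 0 := by
  have hL₁ : Differentiable ℝ L := hL.differentiable two_ne_zero
  have hL₂ : Differentiable ℝ (deriv L) := hL.differentiable_deriv_two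
  have h₂ : deriv (deriv fun t => exp (-t) * L t) y =
      exp (-y) * (deriv (deriv L) y - 2 * deriv L y + L y) := by
    rw [deriv_exp_neg_mul hL₁]
    refine (((hasDerivAt_neg y).exp).mul
      ((hL₂ y).hasDerivAt.sub (hL₁ y).hasDerivAt)).deriv.trans ?_
    simp only [Pi.sub_apply]
    ring
  rw [h₂, deriv_exp_neg_mul hL₁]
  linear_combination exp (-y) * hode

end Kummer

/-- Eigenvalue equation for the CEV Fokker–Planck operator, `γ > 2`.
`L` stands for the generalized Laguerre polynomial `L_n^a` with `a = 1/(2-γ)`,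
characterized by smoothness and the Laguerre ODE `y u'' + (a+1-y) u' + n u = 0`. -/
theorem cev_eigenfunctions_gt_two (γ μ σ : ℝ) (hγ2 : 2 < γ) (hμ : 0 < μ)
    (hσ : 0 < σ) (a ν : ℝ) (ha : a = 1 / (2 - γ)) (hν : ν = 2 * μ / ((γ - 2) * σ ^ 2))
    (n : ℕ) (L : ℝ → ℝ) (hL : ContDiff ℝ ⊤ L)
    (hLag : ∀ y : ℝ, 0 < y →
      y * deriv (deriv L) y + (a + 1 - y) * deriv L y + (n : ℝ) * L y = 0)
    (p : ℝ → ℝ)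
    (hp : p = fun x => x ^ (1 - γ) * Real.exp (-ν * x ^ (2 - γ)) * L (ν * x ^ (2 - γ))) :
    ∀ x : ℝ, 0 < x →
      -μ * deriv (fun t => t * p t) x
        + deriv (deriv (fun t => σ ^ 2 / 2 * t ^ γ * p t)) x
      = (μ - (n : ℝ) * μ * (γ - 2)) * p x := by
  intro x hx
  set f : ℝ → ℝ := fun t => exp (-t) * L t with hf
  have hL₂ : ContDiff ℝ 2 L := hL.of_le le_top
  have hf₂ : ContDiff ℝ 2 f := by fun_prop
  have hν₀ : 0 < ν := hν ▸ div_pos (by positivity) (mul_pos (by linarith) (by positivity))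
  have hp' : ∀ t, p t = t ^ (1 - γ) * f (ν * t ^ (2 - γ)) := by
    intro t
    simp only [hp, hf, neg_mul]
    ring
  have hxp : (fun t => t * p t) =ᶠ[𝓝 x] fun t => t ^ (2 - γ) * f (ν * t ^ (2 - γ)) := by
    filter_upwards [Ioi_mem_nhds hx] with t (ht : 0 < t)
    rw [hp', ← mul_assoc, show 2 - γ = 1 + (1 - γ) by ring, rpow_add ht, rpow_one]
  have hxγp : (fun t => σ ^ 2 / 2 * t ^ γ * p t) =ᶠ[𝓝 x]
      fun t => σ ^ 2 / 2 * (t * f (ν * t ^ (2 - γ))) := by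
    filter_upwards [Ioi_mem_nhds hx] with t (ht : 0 < t)
    rw [hp', mul_assoc, ← mul_assoc (t ^ γ), ← rpow_add ht, show γ + (1 - γ) = 1 by ring,
      rpow_one]
  have hode := laguerre_ode_exp_neg_mul hL₂ (hLag _ (mul_pos hν₀ (rpow_pos_of_pos hx (2 - γ))))
  have hab : a * (2 - γ) = 1 := by rw [ha]; field_simp [show 2 - γ ≠ 0 by linarith]
  have hσν : σ ^ 2 * ν * (2 - γ) = -2 * μ := by
    rw [hν]; field_simp [show γ - 2 ≠ 0 by linarith]; ring
  rw [← hf] at hode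
  rw [hxp.deriv_eq, hxγp.deriv.deriv_eq, deriv_const_mul_field', deriv_const_mul_field']
  beta_reduce
  rw [deriv_deriv_mul_comp_mul_rpow hf₂ hx,
    (hasDerivAt_rpow_mul_comp_mul_rpow (hf₂.differentiable two_ne_zero _) hx).deriv, hp' x,
    show 1 - γ = (2 - γ) - 1 by ring, rpow_sub_one hx.ne']
  set y := ν * x ^ (2 - γ)
  linear_combination (-μ * (2 - γ) * x ^ (2 - γ) / x) * hode
    + (μ * x ^ (2 - γ) / x * (deriv f y + f y)) * hab
    + (x ^ (2 - γ) / (2 * x) * ((1 + (2 - γ)) * deriv f y + (2 - γ) * y * deriv (deriv f) y))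
      * hσν
end

section
/- Let γ > 2, μ, σ > 0. There is no solution h of (σ²/2) x^γ h''(x) + μ x h'(x) = 0 on (0,∞) with h(x) > 0 for x > 0 and lim_{x→0⁺} h(x) = 0 that is non-identically-zero, because every solution has the form h = C₁ + C₂ ∫_{1}^{x} exp(ν y^{2−γ}) dy with ν > 0, and the integrand exp(ν y^{2−γ}) → ∞ so fast as y → 0⁺ that ∫₀¹ exp(ν y^{2−γ}) dy = ∞, making the boundary condition h(0⁺) = 0 incompatible with positivity unless h ≡ 0. -/
open Real Set Filter

/-- For `γ > 2` there is no positive harmonic function of the CEV generator on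
`(0,∞)` vanishing at the origin. -/
theorem cev_no_positive_harmonic_gt_two (γ μ σ : ℝ) (hγ : 2 < γ) (hμ : 0 < μ) (hσ : 0 < σ)
    (h h' h'' : ℝ → ℝ)
    (hd1 : ∀ x ∈ Ioi (0:ℝ), HasDerivAt h (h' x) x)
    (hd2 : ∀ x ∈ Ioi (0:ℝ), HasDerivAt h' (h'' x) x)
    (hode : ∀ x ∈ Ioi (0:ℝ), σ ^ 2 / 2 * x ^ γ * h'' x + μ * x * h' x = 0)
    (hpos : ∀ x ∈ Ioi (0:ℝ), 0 < h x) :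
    ¬ Tendsto h (nhdsWithin 0 (Ioi 0)) (nhds 0) := by
  intro hlim
  have hγ2 : (0:ℝ) < γ - 2 := by linarith
  have hσ2 : (0:ℝ) < σ ^ 2 := by positivity
  set ν : ℝ := 2 * μ / ((γ - 2) * σ ^ 2) with hνdef
  have hν0 : 0 < ν := div_pos (by linarith) (mul_pos hγ2 hσ2)
  set g : ℝ → ℝ := fun x => h' x * exp (-(ν * x ^ ((2:ℝ) - γ))) with hgdef
  -- g has derivative zero on (0,∞)
  have hg : ∀ x ∈ Ioi (0:ℝ), HasDerivAt g 0 x := by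
    intro x hx
    rw [mem_Ioi] at hx
    have hxne : x ≠ 0 := hx.ne'
    have hxγ0 : x ^ γ ≠ 0 := (rpow_pos_of_pos hx γ).ne'
    have hpow : HasDerivAt (fun y : ℝ => y ^ ((2:ℝ) - γ))
        (((2:ℝ) - γ) * x ^ ((2:ℝ) - γ - 1)) x :=
      Real.hasDerivAt_rpow_const (Or.inl hxne)
    have hin : HasDerivAt (fun y : ℝ => -(ν * y ^ ((2:ℝ) - γ)))
        (-(ν * (((2:ℝ) - γ) * x ^ ((2:ℝ) - γ - 1)))) x := (hpow.const_mul ν).neg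
    have hE : HasDerivAt (fun y : ℝ => exp (-(ν * y ^ ((2:ℝ) - γ))))
        (exp (-(ν * x ^ ((2:ℝ) - γ))) * (-(ν * (((2:ℝ) - γ) * x ^ ((2:ℝ) - γ - 1))))) x :=
      hin.exp
    have hmul := (hd2 x hx).mul hE
    -- ODE rearranged
    have key : σ ^ 2 * x ^ γ * h'' x + 2 * μ * x * h' x = 0 := by
      linear_combination 2 * hode x hx
    have hνσ : ν * σ ^ 2 * (2 - γ) = -(2 * μ) := by
      rw [hνdef]; field_simp; ring
    have hx1γ : x ^ ((2:ℝ) - γ - 1) * x ^ γ = x := by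
      rw [← rpow_add hx, show (2:ℝ) - γ - 1 + γ = 1 by ring, rpow_one]
    have T' : (σ ^ 2 * x ^ γ) * h'' x =
        (σ ^ 2 * x ^ γ) * (h' x * (ν * (((2:ℝ) - γ) * x ^ ((2:ℝ) - γ - 1)))) := by
      linear_combination key + (-(h' x * x ^ ((2:ℝ) - γ - 1) * x ^ γ)) * hνσ
        + (2 * μ * h' x) * hx1γ
    have T : h'' x = h' x * (ν * (((2:ℝ) - γ) * x ^ ((2:ℝ) - γ - 1))) :=
      mul_left_cancel₀ (mul_ne_zero hσ2.ne' hxγ0) T'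
    have hzero : h'' x * exp (-(ν * x ^ ((2:ℝ) - γ))) +
        h' x * (exp (-(ν * x ^ ((2:ℝ) - γ))) *
          (-(ν * (((2:ℝ) - γ) * x ^ ((2:ℝ) - γ - 1))))) = 0 := by
      rw [T]; ring
    rwa [hzero] at hmul
  -- g is constant on (0,∞)
  have hcont : ContinuousOn g (Ioi (0:ℝ)) := fun x hx =>
    (hg x hx).continuousAt.continuousWithinAt
  have hdiff : DifferentiableOn ℝ g (interior (Ioi (0:ℝ))) := by
    rw [interior_Ioi]
    exact fun x hx => (hg x hx).differentiableAt.differentiableWithinAt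
  have hgd0 : ∀ x ∈ interior (Ioi (0:ℝ)), deriv g x = 0 := by
    rw [interior_Ioi]; exact fun x hx => (hg x hx).deriv
  have mono := monotoneOn_of_deriv_nonneg (convex_Ioi (0:ℝ)) hcont hdiff
    (fun x hx => (hgd0 x hx).ge)
  have anti := antitoneOn_of_deriv_nonpos (convex_Ioi (0:ℝ)) hcont hdiff
    (fun x hx => (hgd0 x hx).le)
  set c : ℝ := g 1 with hcdef
  have hgconst : ∀ x ∈ Ioi (0:ℝ), g x = c := by
    intro x hx
    rcases le_total x 1 with hle | hle
    · exact le_antisymm (mono hx (by norm_num) hle) (anti hx (by norm_num) hle)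
    · exact le_antisymm (anti (by norm_num) hx hle) (mono (by norm_num) hx hle)
  have hh' : ∀ x ∈ Ioi (0:ℝ), h' x = c * exp (ν * x ^ ((2:ℝ) - γ)) := by
    intro x hx
    have := hgconst x hx
    rw [hgdef] at this
    have hEne : exp (-(ν * x ^ ((2:ℝ) - γ))) ≠ 0 := (exp_pos _).ne'
    field_simp [exp_ne_zero, ← Real.exp_add] at this ⊢
    rw [← this]; rw [mul_assoc, ← Real.exp_add]; simp
  have h1pos : 0 < h 1 := hpos 1 (by norm_num)
  rcases le_or_gt c 0 with hc | hc
  · -- c ≤ 0 : h is antitone, so limit at 0⁺ is ≥ h 1 > 0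
    have hh'np : ∀ x ∈ interior (Ioi (0:ℝ)), deriv h x ≤ 0 := by
      rw [interior_Ioi]
      intro x hx
      rw [(hd1 x hx).deriv, hh' x hx]
      exact mul_nonpos_of_nonpos_of_nonneg hc (exp_pos _).le
    have hanti : AntitoneOn h (Ioi (0:ℝ)) :=
      antitoneOn_of_deriv_nonpos (convex_Ioi 0)
        (fun x hx => (hd1 x hx).continuousAt.continuousWithinAt)
        (by rw [interior_Ioi]; exact fun x hx => (hd1 x hx).differentiableAt.differentiableWithinAt)
        hh'np
    have hev : ∀ᶠ x in nhdsWithin (0:ℝ) (Ioi 0), h 1 ≤ h x := by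
      filter_upwards [Ioo_mem_nhdsGT_of_mem (show (0:ℝ) ∈ Ico (0:ℝ) 1 by norm_num)] with x hx
      exact hanti hx.1 (by norm_num) hx.2.le
    have : h 1 ≤ 0 := ge_of_tendsto hlim hev
    linarith
  · -- c > 0 : h' x ≥ C / x forces h x → -∞ as x → 0⁺
    set n : ℕ := ⌈1 / (γ - 2)⌉₊ with hndef
    have hn : 1 ≤ (n:ℝ) * (γ - 2) := by
      have h1 : 1 / (γ - 2) ≤ (n:ℝ) := by rw [hndef]; exact Nat.le_ceil _
      rw [div_le_iff₀ hγ2] at h1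
      linarith
    set C : ℝ := c * ν ^ n / (n.factorial : ℝ) with hCdef
    have hC : 0 < C := by positivity
    have hkey : ∀ x, 0 < x → x ≤ 1 → C * x⁻¹ ≤ h' x := by
      intro x hx hx1
      have hxpow : (0:ℝ) ≤ ν * x ^ ((2:ℝ) - γ) :=
        mul_nonneg hν0.le (rpow_pos_of_pos hx _).le
      have e1 : (ν * x ^ ((2:ℝ) - γ)) ^ n / (n.factorial : ℝ) ≤ exp (ν * x ^ ((2:ℝ) - γ)) :=
        Real.pow_div_factorial_le_exp _ hxpow n
      have e2 : (ν * x ^ ((2:ℝ) - γ)) ^ n = ν ^ n * x ^ (((2:ℝ) - γ) * n) := by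
        rw [mul_pow, ← Real.rpow_natCast (x ^ ((2:ℝ) - γ)) n, ← Real.rpow_mul hx.le]
      have e3 : x ^ (-1:ℝ) ≤ x ^ (((2:ℝ) - γ) * n) := by
        apply Real.rpow_le_rpow_of_exponent_ge hx hx1
        nlinarith [hn]
      have e4 : C * x⁻¹ ≤ C * x ^ (((2:ℝ) - γ) * n) := by
        rw [← Real.rpow_neg_one x]
        exact mul_le_mul_of_nonneg_left e3 hC.le
      have e5 : C * x ^ (((2:ℝ) - γ) * n) ≤ c * exp (ν * x ^ ((2:ℝ) - γ)) := by
        rw [hCdef]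
        calc c * ν ^ n / (n.factorial : ℝ) * x ^ (((2:ℝ) - γ) * n)
            = c * ((ν * x ^ ((2:ℝ) - γ)) ^ n / (n.factorial : ℝ)) := by rw [e2]; ring
          _ ≤ c * exp (ν * x ^ ((2:ℝ) - γ)) := mul_le_mul_of_nonneg_left e1 hc.le
      rw [hh' x hx]
      exact e4.trans e5
    -- φ x = h x - C * log x is monotone on (0,1]
    set φ : ℝ → ℝ := fun x => h x - C * Real.log x with hφdef
    have hφmono : MonotoneOn φ (Ioc (0:ℝ) 1) := by
      apply monotoneOn_of_deriv_nonneg (convex_Ioc 0 1)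
      · intro x hx
        exact (((hd1 x hx.1).sub ((Real.hasDerivAt_log hx.1.ne').const_mul C)).continuousAt).continuousWithinAt
      · rw [interior_Ioc]
        exact fun x hx =>
          (((hd1 x hx.1).sub ((Real.hasDerivAt_log hx.1.ne').const_mul C)).differentiableAt).differentiableWithinAt
      · rw [interior_Ioc]
        intro x hx
        rw [(show HasDerivAt φ _ x from (hd1 x hx.1).sub ((Real.hasDerivAt_log hx.1.ne').const_mul C)).deriv]
        have := hkey x hx.1 hx.2.le
        linarith
    set ε : ℝ := exp (-(h 1 + 1) / C) with hεdef
    have hε0 : 0 < ε := exp_pos _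
    have hε1 : ε ≤ 1 := by
      rw [hεdef, Real.exp_le_one_iff]
      apply div_nonpos_of_nonpos_of_nonneg _ hC.le
      linarith
    have := hφmono (show ε ∈ Ioc (0:ℝ) 1 from ⟨hε0, hε1⟩) (show (1:ℝ) ∈ Ioc (0:ℝ) 1 by norm_num) hε1
    rw [hφdef] at this
    simp only [Real.log_one, mul_zero, sub_zero] at this
    rw [hεdef, Real.log_exp] at this
    have hmc : C * (-(h 1 + 1) / C) = -(h 1 + 1) := by field_simp
    rw [hmc] at this
    have hεpos := hpos ε hε0
    linarith
end
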